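/- In the weighted-sum error minimization problem: minimize ∑_k c_k·Q^{-1}(ε_k) + d·τ subject to 0 < ε_k ≤ min(τ, ε̂_k) for all k, with c_k > 0, d > 0, and ε̂_1 ≤ ··· ≤ ε̂_K ≤ τ̂ < 1/2, every optimal solution satisfies ε_k* = min(τ*, ε̂_k) for each k, where τ* is the common value for all unconstrained coordinates. -/

import Mathlib

/-- The Gaussian tail function `Q(x) = (1/√(2π)) ∫_x^∞ e^{−t²/2} dt`. -/
noncomputable def gaussQ (x : ℝ) : ℝ :=
  (1 / Real.sqrt (2 * Real.pi)) * ∫ t in Set.Ioi x, Real.exp (-(t ^ 2) / 2)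

/-- The inverse of the Gaussian tail function. -/
noncomputable def gaussQinv : ℝ → ℝ := Function.invFun gaussQ

/-!
Raising a non-tight coordinate `ε_k < min(τ, ε̂_k)` up to `min(τ, ε̂_k)` keeps the point
feasible and, since `Q⁻¹` is strictly decreasing on `(0, 1/2]` and `c_k > 0`, strictly lowers the
objective; so at an optimum every coordinate is tight. The monotonicity of `Q⁻¹` comes from `Q`
being a continuous, strictly decreasing function with `Q(0) = 1/2` and `Q(x) → 0` as `x → ∞`.
-/

open MeasureTheory Real Set Filter Topology

lemma integrable_exp_neg_sq_div_two : Integrable fun t : ℝ => exp (-(t ^ 2) / 2) := by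
  simpa [neg_div, div_eq_inv_mul] using integrable_exp_neg_mul_sq (by norm_num : (0 : ℝ) < 1 / 2)

lemma gaussQ_sub_gaussQ (a b : ℝ) :
    gaussQ a - gaussQ b = 1 / √(2 * π) * ∫ t in a..b, exp (-(t ^ 2) / 2) := by
  rw [gaussQ, gaussQ, ← mul_sub, intervalIntegral.integral_Ioi_sub_Ioi'
    integrable_exp_neg_sq_div_two.integrableOn integrable_exp_neg_sq_div_two.integrableOn]

lemma gaussQ_eq_gaussQ_zero_sub (x : ℝ) :
    gaussQ x = gaussQ 0 - 1 / √(2 * π) * ∫ t in (0 : ℝ)..x, exp (-(t ^ 2) / 2) := by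
  rw [← gaussQ_sub_gaussQ, sub_sub_cancel]

lemma gaussQ_zero : gaussQ 0 = 1 / 2 := by
  have hsqrt : √(2 * π) ≠ 0 := (sqrt_pos.mpr (by positivity)).ne'
  have hexp : (fun t : ℝ => exp (-(t ^ 2) / 2)) = fun t => exp (-(1 / 2) * t ^ 2) := by
    funext t; ring_nf
  rw [gaussQ, hexp, integral_gaussian_Ioi, show π / (1 / 2) = 2 * π by ring]
  field_simp

lemma gaussQ_strictAnti : StrictAnti gaussQ := fun a b hab => by
  have hint : 0 < ∫ t in a..b, exp (-(t ^ 2) / 2) :=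
    intervalIntegral.intervalIntegral_pos_of_pos_on
      integrable_exp_neg_sq_div_two.intervalIntegrable (fun t _ => exp_pos _) hab
  rw [← sub_pos, gaussQ_sub_gaussQ]
  positivity

lemma continuous_gaussQ : Continuous gaussQ := by
  refine Continuous.congr ?_ fun x => (gaussQ_eq_gaussQ_zero_sub x).symm
  exact continuous_const.sub <| continuous_const.mul <| intervalIntegral.continuous_primitive
    (fun _ _ => integrable_exp_neg_sq_div_two.intervalIntegrable) 0

lemma tendsto_gaussQ_atTop : Tendsto gaussQ atTop (𝓝 0) := by
  have hlim := (intervalIntegral_tendsto_integral_Ioi 0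
    integrable_exp_neg_sq_div_two.integrableOn tendsto_id).const_mul (1 / √(2 * π))
  have hzero : gaussQ 0 - 1 / √(2 * π) * ∫ t in Ioi 0, exp (-(t ^ 2) / 2) = 0 := by
    rw [gaussQ, sub_self]
  have hsub := (tendsto_const_nhds (x := gaussQ 0)).sub hlim
  rw [hzero] at hsub
  exact hsub.congr fun x => (gaussQ_eq_gaussQ_zero_sub x).symm

lemma Ioc_zero_half_subset_range_gaussQ : Ioc (0 : ℝ) (1 / 2) ⊆ range gaussQ := fun y hy => by
  obtain ⟨x, hx⟩ := (tendsto_gaussQ_atTop.eventually (gt_mem_nhds hy.1)).exists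
  exact mem_range_of_exists_le_of_exists_ge continuous_gaussQ ⟨x, hx.le⟩
    ⟨0, gaussQ_zero ▸ hy.2⟩

lemma gaussQinv_strictAntiOn : StrictAntiOn gaussQinv (Ioc 0 (1 / 2)) := fun u hu v hv huv => by
  rw [← gaussQ_strictAnti.lt_iff_gt, gaussQinv,
    Function.invFun_eq (Ioc_zero_half_subset_range_gaussQ hu),
    Function.invFun_eq (Ioc_zero_half_subset_range_gaussQ hv)]
  exact huv

lemma sum_mul_comp_update_lt {ι : Type*} [Fintype ι] [DecidableEq ι] {g : ℝ → ℝ} {s : Set ℝ}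
    (hg : StrictAntiOn g s) {c : ι → ℝ} {x : ι → ℝ} {k : ι} {y : ℝ} (hc : 0 < c k)
    (hxk : x k ∈ s) (hy : y ∈ s) (hlt : x k < y) :
    ∑ j, c j * g (Function.update x k y j) < ∑ j, c j * g (x j) := by
  refine Finset.sum_lt_sum (fun j _ => ?_) ⟨k, Finset.mem_univ k, ?_⟩
  · rcases eq_or_ne j k with rfl | hjk
    · rw [Function.update_self]
      exact mul_le_mul_of_nonneg_left (hg hxk hy hlt).le hc.le
    · rw [Function.update_of_ne hjk]
  · rw [Function.update_self]
    exact mul_lt_mul_of_pos_left (hg hxk hy hlt) hc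

theorem stmt_15_general (K : ℕ) (c : Fin K → ℝ) (d : ℝ) (εhat : Fin K → ℝ) (τhat : ℝ)
    (hc : ∀ k, 0 < c k) (hεpos : ∀ k, 0 < εhat k)
    (hεhat : ∀ k, εhat k ≤ τhat) (hτhat : τhat < 1 / 2)
    (ε : Fin K → ℝ) (τ : ℝ)
    (hfeas : (∀ k, 0 < ε k ∧ ε k ≤ min τ (εhat k)) ∧ 0 < τ ∧ τ ≤ τhat)
    (hopt : ∀ (ε' : Fin K → ℝ) (τ' : ℝ),
      ((∀ k, 0 < ε' k ∧ ε' k ≤ min τ' (εhat k)) ∧ 0 < τ' ∧ τ' ≤ τhat) →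
      ∑ k, c k * gaussQinv (ε k) + d * τ ≤ ∑ k, c k * gaussQinv (ε' k) + d * τ') :
    ∀ k, ε k = min τ (εhat k) := by
  intro k
  obtain ⟨hε, hτ, hττhat⟩ := hfeas
  refine (hε k).2.eq_of_not_lt fun hlt => ?_
  set m := min τ (εhat k)
  have hm : m ∈ Ioc (0 : ℝ) (1 / 2) :=
    ⟨lt_min hτ (hεpos k), (min_le_right _ _).trans ((hεhat k).trans hτhat.le)⟩
  have hfeas' : ∀ j, 0 < Function.update ε k m j ∧ Function.update ε k m j ≤ min τ (εhat j) :=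
    Function.forall_update_iff ε (p := fun j x => 0 < x ∧ x ≤ min τ (εhat j)) |>.mpr
      ⟨⟨hm.1, le_rfl⟩, fun j _ => hε j⟩
  have hopt' := hopt _ τ ⟨hfeas', hτ, hττhat⟩
  have hdecrease := sum_mul_comp_update_lt gaussQinv_strictAntiOn (hc k)
    ⟨(hε k).1, hlt.le.trans hm.2⟩ hm hlt
  linarith

/-- Structure of the optimal error probabilities: in the weighted-sum minimization of
`∑_k c_k·Q⁻¹(ε_k) + d·τ` over `0 < ε_k ≤ min(τ, ε̂_k)` and `0 < τ ≤ τ̂`, with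
`c_k > 0`, `d > 0`, `0 < ε̂_1 ≤ ⋯ ≤ ε̂_K ≤ τ̂ < 1/2`, every optimal solution
satisfies `ε_k* = min(τ*, ε̂_k)` for each `k`. -/
theorem stmt_15 (K : ℕ) (c : Fin K → ℝ) (d : ℝ) (εhat : Fin K → ℝ) (τhat : ℝ)
    (hc : ∀ k, 0 < c k) (hd : 0 < d) (hεpos : ∀ k, 0 < εhat k)
    (hsorted : ∀ i j : Fin K, i ≤ j → εhat i ≤ εhat j)
    (hεhat : ∀ k, εhat k ≤ τhat) (hτhat : τhat < 1 / 2)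
    (ε : Fin K → ℝ) (τ : ℝ)
    (hfeas : (∀ k, 0 < ε k ∧ ε k ≤ min τ (εhat k)) ∧ 0 < τ ∧ τ ≤ τhat)
    (hopt : ∀ (ε' : Fin K → ℝ) (τ' : ℝ),
      ((∀ k, 0 < ε' k ∧ ε' k ≤ min τ' (εhat k)) ∧ 0 < τ' ∧ τ' ≤ τhat) →
      ∑ k, c k * gaussQinv (ε k) + d * τ ≤ ∑ k, c k * gaussQinv (ε' k) + d * τ') :
    ∀ k, ε k = min τ (εhat k) :=
  stmt_15_general K c d εhat τhat hc hεpos hεhat hτhat ε τ hfeas hopt
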